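/- Let X ∈ ℝ^{K×N} with its N columns partitioned into C classes of sizes n_1,…,n_C (each n_c ≥ 1, Σ_c n_c = N), with diagonal 0/1 column selectors P_c. Let E_N ∈ ℝ^{N×N} be the all-ones matrix, M_c = (1/n_c)·X P_c E_N P_c (the matrix supported on class-c columns, each such column equal to the class-c column mean), M̂ = Σ_{c=1}^C M_c, and M = (1/N)·X E_N (every column equal to the overall column mean). Define the Fisher discriminative coefficient term g(X) = Σ_{c=1}^C ( ‖X P_c − M_c‖_F² − ‖M_c − M P_c‖_F² ) + ‖X‖_F². Then g is differentiable and the gradient of (1/2)g with respect to the Frobenius inner product at X equals 2X + M − 2M̂. -/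

import Mathlib

open Matrix Finset

attribute [local instance] Matrix.normedAddCommGroup Matrix.normedSpace

/-- Squared Frobenius norm: `‖A‖_F² = trace (A * Aᵀ)`. -/
noncomputable def frobSq {m n : Type*} [Fintype m] [Fintype n] (A : Matrix m n ℝ) : ℝ :=
  Matrix.trace (A * Aᵀ)

/-- Diagonal 0/1 selector matrix for class `c` determined by a labeling `lab`. -/
noncomputable def sel {N C : ℕ} (lab : Fin N → Fin C) (c : Fin C) :
    Matrix (Fin N) (Fin N) ℝ :=
  Matrix.diagonal fun i => if lab i = c then (1 : ℝ) else 0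

/-- The all-ones `N × N` matrix. -/
def onesM (N : ℕ) : Matrix (Fin N) (Fin N) ℝ := Matrix.of fun _ _ => (1 : ℝ)

/-- The continuous linear functional `H ↦ ⟨G, H⟩_F = trace (G * Hᵀ)`. -/
noncomputable def frobCLM {m n : Type*} [Fintype m] [Fintype n]
    (G : Matrix m n ℝ) : Matrix m n ℝ →L[ℝ] ℝ :=
  LinearMap.toContinuousLinearMap
  { toFun := fun H => Matrix.trace (G * Hᵀ)
    map_add' := fun H₁ H₂ => by simp [Matrix.transpose_add, Matrix.mul_add]
    map_smul' := fun r H => by simp [Matrix.transpose_smul, Matrix.mul_smul] }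

/-! Writing `J = E_N / N` and `Q_c = P_c E_N P_c / n_c` for the averaging matrices, one has
`M = X J`, `M_c = X Q_c`, and hence `g(X) = tr (X S Xᵀ)` with `S = 2I + J - 2 Σ_c Q_c`: since
`Q_c` and `J` are symmetric idempotents with `P_c Q_c = Q_c` and `Q_c J = P_c J`, the within-class
term contributes `P_c - Q_c` and the between-class terms sum to `Σ_c Q_c - J`. As `S` is
symmetric, the gradient of `½ tr (X S Xᵀ)` is `X S = 2X + M - 2M̂`. -/

section Frobenius

variable {m n : Type*} [Fintype m] [Fintype n]

noncomputable def frobBilin : Matrix m n ℝ →L[ℝ] Matrix m n ℝ →L[ℝ] ℝ :=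
  (LinearMap.mk₂ ℝ (fun G H => trace (G * Hᵀ))
    (fun _ _ _ => by rw [Matrix.add_mul, trace_add])
    (fun _ _ _ => by rw [Matrix.smul_mul, trace_smul])
    (fun _ _ _ => by rw [transpose_add, Matrix.mul_add, trace_add])
    (fun _ _ _ => by rw [transpose_smul, Matrix.mul_smul, trace_smul])).toContinuousBilinearMap

lemma hasFDerivAt_trace_mul_mul_transpose (S : Matrix n n ℝ) (X : Matrix m n ℝ) :
    HasFDerivAt (fun Z : Matrix m n ℝ => trace (Z * S * Zᵀ)) (frobCLM (X * (S + Sᵀ))) X := by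
  have hmul : HasFDerivAt (fun Z : Matrix m n ℝ => Z * S)
      (mulRightLinearMap m ℝ S).toContinuousLinearMap X :=
    (mulRightLinearMap m ℝ S).toContinuousLinearMap.hasFDerivAt
  refine (frobBilin.hasFDerivAt_of_bilinear hmul (hasFDerivAt_id X)).congr_fderiv ?_
  ext H
  have hswap : trace (H * S * Xᵀ) = trace (X * Sᵀ * Hᵀ) := by
    rw [← trace_transpose, transpose_mul, transpose_mul, transpose_transpose, Matrix.mul_assoc]
  change trace (X * S * Hᵀ) + trace (H * S * Xᵀ) = trace (X * (S + Sᵀ) * Hᵀ)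
  rw [hswap, Matrix.mul_add, Matrix.add_mul, trace_add]

lemma hasFDerivAt_half_trace_mul_mul_transpose {S : Matrix n n ℝ} (hS : Sᵀ = S)
    (X : Matrix m n ℝ) :
    HasFDerivAt (fun Z : Matrix m n ℝ => 1 / 2 * trace (Z * S * Zᵀ)) (frobCLM (X * S)) X := by
  refine ((hasFDerivAt_trace_mul_mul_transpose S X).const_mul (1 / 2)).congr_fderiv ?_
  ext H
  change 1 / 2 * trace (X * (S + Sᵀ) * Hᵀ) = trace (X * S * Hᵀ)
  rw [hS, ← two_smul ℝ S, Matrix.mul_smul, Matrix.smul_mul, trace_smul, smul_eq_mul]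
  ring

lemma frobSq_mul {l : Type*} [Fintype l] (Z : Matrix m n ℝ) (A : Matrix n l ℝ) :
    frobSq (Z * A) = trace (Z * (A * Aᵀ) * Zᵀ) := by
  rw [frobSq, transpose_mul, Matrix.mul_assoc, Matrix.mul_assoc, Matrix.mul_assoc]

end Frobenius

section ClassMeans

variable {N C : ℕ} (lab : Fin N → Fin C)

def classSize (c : Fin C) : ℕ := (univ.filter fun i => lab i = c).card

noncomputable def classMean (c : Fin C) : Matrix (Fin N) (Fin N) ℝ :=
  (classSize lab c : ℝ)⁻¹ • (sel lab c * onesM N * sel lab c)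

variable (N) in
noncomputable def meanMatrix : Matrix (Fin N) (Fin N) ℝ := (N : ℝ)⁻¹ • onesM N

lemma onesM_transpose : (onesM N)ᵀ = onesM N := rfl

lemma onesM_mul_onesM : onesM N * onesM N = (N : ℝ) • onesM N := by
  ext i j; simp [onesM, Matrix.mul_apply]

lemma sel_transpose (c : Fin C) : (sel lab c)ᵀ = sel lab c := diagonal_transpose _

lemma sel_mul_sel (c : Fin C) : sel lab c * sel lab c = sel lab c := by
  rw [sel, diagonal_mul_diagonal]
  congr 1; ext i; split_ifs <;> simp

lemma sum_sel : ∑ c, sel lab c = 1 := by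
  ext i j
  rcases eq_or_ne i j with rfl | hij
  · simp [sel, Matrix.sum_apply]
  · simp [sel, Matrix.sum_apply, hij]

lemma onesM_mul_sel_mul_onesM (c : Fin C) :
    onesM N * sel lab c * onesM N = (classSize lab c : ℝ) • onesM N := by
  ext i j
  simp [onesM, sel, classSize, Matrix.mul_apply, diagonal_apply]

lemma sel_eq_zero_of_classSize_eq_zero {c : Fin C} (h : classSize lab c = 0) : sel lab c = 0 := by
  have hne : ∀ i, lab i ≠ c := by
    simpa [classSize, Finset.card_eq_zero, Finset.filter_eq_empty_iff] using h
  ext i j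
  simp [sel, hne]

-- An empty class has `sel lab c = 0`, so the junk value `0⁻¹ = 0` does no harm.
lemma inv_classSize_mul_classSize_smul_sel (c : Fin C) :
    ((classSize lab c : ℝ)⁻¹ * classSize lab c) • sel lab c = sel lab c := by
  rcases eq_or_ne (classSize lab c) 0 with h | h
  · simp [sel_eq_zero_of_classSize_eq_zero lab h]
  · simp [h]

lemma classMean_transpose (c : Fin C) : (classMean lab c)ᵀ = classMean lab c := by
  simp [classMean, transpose_mul, sel_transpose, onesM_transpose, Matrix.mul_assoc]

lemma sel_mul_classMean (c : Fin C) : sel lab c * classMean lab c = classMean lab c := by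
  rw [classMean, Matrix.mul_smul, ← Matrix.mul_assoc, ← Matrix.mul_assoc, sel_mul_sel]

lemma classMean_mul_sel (c : Fin C) : classMean lab c * sel lab c = classMean lab c := by
  rw [classMean, Matrix.smul_mul, Matrix.mul_assoc _ (sel lab c), sel_mul_sel]

lemma classMean_mul_self (c : Fin C) : classMean lab c * classMean lab c = classMean lab c := by
  have h : sel lab c * onesM N * sel lab c * (sel lab c * onesM N * sel lab c)
      = (classSize lab c : ℝ) • (sel lab c * onesM N * sel lab c) := by
    rw [show sel lab c * onesM N * sel lab c * (sel lab c * onesM N * sel lab c)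
        = sel lab c * (onesM N * (sel lab c * sel lab c) * onesM N) * sel lab c by
          simp only [Matrix.mul_assoc],
      sel_mul_sel, onesM_mul_sel_mul_onesM, Matrix.mul_smul, Matrix.smul_mul, Matrix.mul_assoc]
  rw [classMean, Matrix.smul_mul, Matrix.mul_smul, h, smul_smul, smul_smul]
  congr 1
  simpa using mul_self_mul_inv (classSize lab c : ℝ)⁻¹

lemma classMean_mul_onesM (c : Fin C) : classMean lab c * onesM N = sel lab c * onesM N := by
  rw [classMean, Matrix.smul_mul, Matrix.mul_assoc, Matrix.mul_assoc,
    ← Matrix.mul_assoc (onesM N), onesM_mul_sel_mul_onesM, Matrix.mul_smul, smul_smul,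
    ← Matrix.smul_mul, inv_classSize_mul_classSize_smul_sel]

lemma classMean_mul_meanMatrix (c : Fin C) :
    classMean lab c * meanMatrix N = sel lab c * meanMatrix N := by
  rw [meanMatrix, Matrix.mul_smul, Matrix.mul_smul, classMean_mul_onesM]

lemma meanMatrix_transpose : (meanMatrix N)ᵀ = meanMatrix N := rfl

lemma meanMatrix_mul_classMean (c : Fin C) :
    meanMatrix N * classMean lab c = meanMatrix N * sel lab c := by
  simpa [transpose_mul, classMean_transpose, sel_transpose, meanMatrix_transpose] using
    congrArg transpose (classMean_mul_meanMatrix lab c)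

lemma meanMatrix_mul_self : meanMatrix N * meanMatrix N = meanMatrix N := by
  rw [meanMatrix, Matrix.smul_mul, Matrix.mul_smul, onesM_mul_onesM, smul_smul, smul_smul]
  congr 1
  simpa using mul_self_mul_inv (N : ℝ)⁻¹

lemma sel_sub_classMean_mul_transpose (c : Fin C) :
    (sel lab c - classMean lab c) * (sel lab c - classMean lab c)ᵀ
      = sel lab c - classMean lab c := by
  rw [transpose_sub, sel_transpose, classMean_transpose]
  simp only [Matrix.sub_mul, Matrix.mul_sub, sel_mul_sel, sel_mul_classMean, classMean_mul_sel,
    classMean_mul_self]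
  abel

lemma classMean_sub_meanMatrix_mul_sel_mul_transpose (c : Fin C) :
    (classMean lab c - meanMatrix N * sel lab c) * (classMean lab c - meanMatrix N * sel lab c)ᵀ
      = classMean lab c - sel lab c * meanMatrix N - meanMatrix N * sel lab c
        + meanMatrix N * sel lab c * meanMatrix N := by
  rw [transpose_sub, transpose_mul, sel_transpose, classMean_transpose, meanMatrix_transpose]
  simp only [Matrix.sub_mul, Matrix.mul_sub, Matrix.mul_assoc, classMean_mul_self]
  rw [sel_mul_classMean, meanMatrix_mul_classMean, ← Matrix.mul_assoc (classMean lab c),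
    classMean_mul_sel, classMean_mul_meanMatrix, ← Matrix.mul_assoc (sel lab c), sel_mul_sel]
  abel

noncomputable def fisherGram : Matrix (Fin N) (Fin N) ℝ :=
  (2 : ℝ) • 1 + meanMatrix N - (2 : ℝ) • ∑ c, classMean lab c

lemma fisherGram_transpose : (fisherGram lab)ᵀ = fisherGram lab := by
  simp [fisherGram, transpose_sum, classMean_transpose, meanMatrix_transpose]

lemma fisherGram_eq_sum :
    fisherGram lab = ∑ c, ((sel lab c - classMean lab c) * (sel lab c - classMean lab c)ᵀ
        - (classMean lab c - meanMatrix N * sel lab c)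
          * (classMean lab c - meanMatrix N * sel lab c)ᵀ) + 1 := by
  simp only [sel_sub_classMean_mul_transpose, classMean_sub_meanMatrix_mul_sel_mul_transpose,
    sum_sub_distrib, sum_add_distrib, ← Finset.sum_mul, ← Finset.mul_sum, sum_sel,
    Matrix.one_mul, Matrix.mul_one, meanMatrix_mul_self, fisherGram]
  module

variable {K : ℕ}

noncomputable def fisherTerm (Z : Matrix (Fin K) (Fin N) ℝ) : ℝ :=
  ∑ c, (frobSq (Z * sel lab c - Z * classMean lab c)
    - frobSq (Z * classMean lab c - Z * meanMatrix N * sel lab c)) + frobSq Z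

lemma fisherTerm_eq_trace (Z : Matrix (Fin K) (Fin N) ℝ) :
    fisherTerm lab Z = trace (Z * fisherGram lab * Zᵀ) := by
  rw [fisherTerm, fisherGram_eq_sum, Matrix.mul_add, Matrix.add_mul, trace_add, Matrix.mul_one,
    Matrix.mul_sum, Matrix.sum_mul, trace_sum]
  congr 1
  refine sum_congr rfl fun c _ => ?_
  rw [Matrix.mul_assoc Z (meanMatrix N), ← Matrix.mul_sub, ← Matrix.mul_sub, frobSq_mul,
    frobSq_mul, ← trace_sub, ← Matrix.sub_mul, ← Matrix.mul_sub]

end ClassMeans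

theorem stmt3_general {K N C : ℕ} (lab : Fin N → Fin C)
    (n : Fin C → ℕ) (hn : ∀ c, n c = (Finset.univ.filter fun i => lab i = c).card)
    (P : Fin C → Matrix (Fin N) (Fin N) ℝ) (hP : P = sel lab)
    (Mc : Matrix (Fin K) (Fin N) ℝ → Fin C → Matrix (Fin K) (Fin N) ℝ)
    (hMc : ∀ X c, Mc X c = ((1 : ℝ) / (n c : ℝ)) • (X * P c * onesM N * P c))
    (M : Matrix (Fin K) (Fin N) ℝ → Matrix (Fin K) (Fin N) ℝ)
    (hM : ∀ X, M X = ((1 : ℝ) / (N : ℝ)) • (X * onesM N))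
    (Mhat : Matrix (Fin K) (Fin N) ℝ → Matrix (Fin K) (Fin N) ℝ)
    (hMhat : ∀ X, Mhat X = ∑ c : Fin C, Mc X c)
    (g : Matrix (Fin K) (Fin N) ℝ → ℝ)
    (hg : ∀ X, g X = (∑ c : Fin C,
        (frobSq (X * P c - Mc X c) - frobSq (Mc X c - M X * P c))) + frobSq X)
    (X : Matrix (Fin K) (Fin N) ℝ) :
    HasFDerivAt (fun Z => (1/2) * g Z)
      (frobCLM ((2 : ℝ) • X + M X - (2 : ℝ) • Mhat X)) X := by
  obtain rfl : n = classSize lab := funext hn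
  subst hP
  have hMc' : ∀ Z c, Mc Z c = Z * classMean lab c := fun Z c => by
    rw [hMc, classMean, Matrix.mul_smul, one_div, ← Matrix.mul_assoc, ← Matrix.mul_assoc]
  have hM' : ∀ Z, M Z = Z * meanMatrix N := fun Z => by
    rw [hM, meanMatrix, Matrix.mul_smul, one_div]
  have hg' : (fun Z => 1 / 2 * g Z) = fun Z => 1 / 2 * trace (Z * fisherGram lab * Zᵀ) := by
    funext Z
    rw [hg, ← fisherTerm_eq_trace]
    simp only [hMc', hM', fisherTerm]
  have hXS : X * fisherGram lab = (2 : ℝ) • X + M X - (2 : ℝ) • Mhat X := by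
    simp only [fisherGram, hM', hMhat, hMc', Matrix.mul_add, Matrix.mul_sub, Matrix.mul_smul,
      Matrix.mul_one, Matrix.mul_sum]
  rw [hg', ← hXS]
  exact hasFDerivAt_half_trace_mul_mul_transpose (fisherGram_transpose lab) X

/-- The Fisher discriminative coefficient term
`g(X) = Σ_c (‖X P_c − M_c‖_F² − ‖M_c − M P_c‖_F²) + ‖X‖_F²` is differentiable and the
gradient of `½ g` at `X` (w.r.t. the Frobenius inner product) equals `2X + M − 2M̂`. -/
theorem stmt3 {K N C : ℕ} (lab : Fin N → Fin C)
    (n : Fin C → ℕ) (hn : ∀ c, n c = (Finset.univ.filter fun i => lab i = c).card)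
    (hn1 : ∀ c, 1 ≤ n c)
    (P : Fin C → Matrix (Fin N) (Fin N) ℝ) (hP : P = sel lab)
    (Mc : Matrix (Fin K) (Fin N) ℝ → Fin C → Matrix (Fin K) (Fin N) ℝ)
    (hMc : ∀ X c, Mc X c = ((1 : ℝ) / (n c : ℝ)) • (X * P c * onesM N * P c))
    (M : Matrix (Fin K) (Fin N) ℝ → Matrix (Fin K) (Fin N) ℝ)
    (hM : ∀ X, M X = ((1 : ℝ) / (N : ℝ)) • (X * onesM N))
    (Mhat : Matrix (Fin K) (Fin N) ℝ → Matrix (Fin K) (Fin N) ℝ)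
    (hMhat : ∀ X, Mhat X = ∑ c : Fin C, Mc X c)
    (g : Matrix (Fin K) (Fin N) ℝ → ℝ)
    (hg : ∀ X, g X = (∑ c : Fin C,
        (frobSq (X * P c - Mc X c) - frobSq (Mc X c - M X * P c))) + frobSq X)
    (X : Matrix (Fin K) (Fin N) ℝ) :
    HasFDerivAt (fun Z => (1/2) * g Z)
      (frobCLM ((2 : ℝ) • X + M X - (2 : ℝ) • Mhat X)) X :=
  stmt3_general lab n hn P hP Mc hMc M hM Mhat hMhat g hg X
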